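/- Let S ⊂ R be rectangles in ℤ² with dimensions dim(R) = (a,b), dim(S) = (a−s, b−t), with long(S) ≥ short(R). Then U(S,R)/q ≥ (b − d)·g(aq), where d = long(S), a = short(R), b = long(R), and U(S,R) = W(q·dim(S), q·dim(R)) with W(𝐚,𝐛) = inf over piecewise-linear increasing paths γ from 𝐚 to 𝐛 of ∫_γ (g(y)dx + g(x)dy). -/
import Mathlib


noncomputable def betaFn (u : ℝ) : ℝ := (u + Real.sqrt (u * (4 - 3 * u))) / 2

noncomputable def gFn (z : ℝ) : ℝ := - Real.log (betaFn (1 - Real.exp (-z)))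


lemma betaFn_pos {u : ℝ} (hu : 0 < u) : 0 < betaFn u := by
  have h := Real.sqrt_nonneg (u * (4 - 3 * u))
  unfold betaFn; linarith

lemma betaFn_le_one {u : ℝ} (h0 : 0 ≤ u) (h1 : u ≤ 1) : betaFn u ≤ 1 := by
  have h : Real.sqrt (u * (4 - 3 * u)) ≤ 2 - u := by
    rw [show (2 - u) = Real.sqrt ((2 - u) ^ 2) from (Real.sqrt_sq (by linarith)).symm]
    apply Real.sqrt_le_sqrt; nlinarith [sq_nonneg (1 - u)]
  unfold betaFn; linarith

lemma betaFn_mono {u v : ℝ} (h0 : 0 ≤ u) (huv : u ≤ v) (h1 : v ≤ 1) :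
    betaFn u ≤ betaFn v := by
  set A := Real.sqrt (u * (4 - 3 * u)) with hA
  set B := Real.sqrt (v * (4 - 3 * v)) with hB
  have hAnn : 0 ≤ A := Real.sqrt_nonneg _
  have hBnn : 0 ≤ B := Real.sqrt_nonneg _
  have hA2 : A ^ 2 = u * (4 - 3 * u) := Real.sq_sqrt (by nlinarith)
  have hB2 : B ^ 2 = v * (4 - 3 * v) := Real.sq_sqrt (by nlinarith)
  have hvBuA : u * A ≤ v * B := by
    have hsq : (u * A) ^ 2 ≤ (v * B) ^ 2 := by
      have : (u*A)^2 = u^2 * (u * (4 - 3*u)) := by rw [mul_pow, hA2]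
      have h2 : (v*B)^2 = v^2 * (v * (4 - 3*v)) := by rw [mul_pow, hB2]
      rw [this, h2]
      have hvu : 0 ≤ v - u := sub_nonneg.mpr huv
      have h1v : 0 ≤ 1 - v := by linarith
      have h1u : 0 ≤ 1 - u := by linarith
      have hv : 0 ≤ v := le_trans h0 huv
      nlinarith [mul_nonneg (mul_nonneg hvu h1v) (sq_nonneg v),
        mul_nonneg (mul_nonneg hvu h1v) (mul_nonneg h0 hv),
        mul_nonneg (mul_nonneg hvu h1u) (sq_nonneg u),
        mul_nonneg (mul_nonneg hvu h1u) (mul_nonneg h0 hv),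
        mul_nonneg hvu (sq_nonneg (v - u))]
    have h1' : 0 ≤ u * A := mul_nonneg h0 hAnn
    have h2' : 0 ≤ v * B := mul_nonneg (le_trans h0 huv) hBnn
    nlinarith
  have hkey : (u + A) ^ 2 ≤ (v + B) ^ 2 := by nlinarith
  have : u + A ≤ v + B := by
    have h1' : 0 ≤ u + A := by linarith
    have h2' : 0 ≤ v + B := by linarith
    nlinarith
  unfold betaFn; linarith

lemma inner_pos {z : ℝ} (hz : 0 < z) : 0 < 1 - Real.exp (-z) := by
  have : Real.exp (-z) < 1 := Real.exp_lt_one_iff.mpr (by linarith)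
  linarith

lemma inner_lt_one (z : ℝ) : 1 - Real.exp (-z) < 1 := by
  have := Real.exp_pos (-z); linarith

lemma gFn_nonneg {z : ℝ} (hz : 0 < z) : 0 ≤ gFn z := by
  unfold gFn
  have h1 := inner_pos hz
  have h2 := inner_lt_one z
  have := Real.log_nonpos (le_of_lt (betaFn_pos h1)) (betaFn_le_one h1.le h2.le)
  linarith

lemma gFn_anti {x y : ℝ} (hx : 0 < x) (hxy : x ≤ y) : gFn y ≤ gFn x := by
  unfold gFn
  have hux := inner_pos hx
  have huv : 1 - Real.exp (-x) ≤ 1 - Real.exp (-y) := by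
    have : Real.exp (-y) ≤ Real.exp (-x) := Real.exp_le_exp.mpr (by linarith)
    linarith
  have h := betaFn_mono hux.le huv (inner_lt_one y).le
  have := Real.log_le_log (betaFn_pos hux) h
  linarith

lemma gFn_contOn : ContinuousOn gFn (Set.Ioi 0) := by
  intro z hz
  have hz' : (0:ℝ) < z := hz
  have hb : Continuous betaFn := by
    unfold betaFn; continuity
  have hinner : Continuous (fun z : ℝ => 1 - Real.exp (-z)) := by continuity
  have hne : betaFn (1 - Real.exp (-z)) ≠ 0 := ne_of_gt (betaFn_pos (inner_pos hz'))
  exact ((((hb.comp hinner).continuousAt).log hne).neg).continuousWithinAt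

/-- The integral `∫_γ (g(y)dx + g(x)dy)` along the straight segment from `P` to `Q`. -/
noncomputable def segInt (P Q : ℝ × ℝ) : ℝ :=
  ∫ t in (0:ℝ)..1,
    (gFn (P.2 + t * (Q.2 - P.2)) * (Q.1 - P.1) + gFn (P.1 + t * (Q.1 - P.1)) * (Q.2 - P.2))

/-- Holroyd's variational quantity: the infimum over piecewise linear increasing
paths from `a` to `b` of `∫_γ (g(y)dx + g(x)dy)`. -/
noncomputable def WFn (a b : ℝ × ℝ) : ℝ :=
  sInf {w : ℝ | ∃ (n : ℕ) (γ : ℕ → ℝ × ℝ), γ 0 = a ∧ γ n = b ∧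
      (∀ i < n, γ i ≤ γ (i + 1)) ∧ w = ∑ i ∈ Finset.range n, segInt (γ i) (γ (i + 1))}

lemma segInt_ge {P Q : ℝ × ℝ} {X : ℝ} (hP1 : 0 < P.1) (hP2 : 0 < P.2)
    (hPQ : P ≤ Q) (hQ1 : Q.1 ≤ X) :
    gFn X * (Q.2 - P.2) ≤ segInt P Q := by
  obtain ⟨h1, h2⟩ := Prod.le_def.mp hPQ
  set f : ℝ → ℝ := fun t =>
    gFn (P.2 + t * (Q.2 - P.2)) * (Q.1 - P.1) + gFn (P.1 + t * (Q.1 - P.1)) * (Q.2 - P.2)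
    with hf
  have hx : ∀ t ∈ Set.Icc (0:ℝ) 1, 0 < P.1 + t * (Q.1 - P.1) ∧ P.1 + t * (Q.1 - P.1) ≤ X := by
    intro t ht
    constructor
    · nlinarith [ht.1, ht.2]
    · nlinarith [ht.1, ht.2]
  have hy : ∀ t ∈ Set.Icc (0:ℝ) 1, 0 < P.2 + t * (Q.2 - P.2) := by
    intro t ht; nlinarith [ht.1, ht.2]
  have hcont : ContinuousOn f (Set.Icc 0 1) := by
    apply ContinuousOn.add
    · apply ContinuousOn.mul _ continuousOn_const
      apply gFn_contOn.comp
      · exact (continuous_const.add (continuous_id.mul continuous_const)).continuousOn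
      · intro t ht; exact hy t ht
    · apply ContinuousOn.mul _ continuousOn_const
      apply gFn_contOn.comp
      · exact (continuous_const.add (continuous_id.mul continuous_const)).continuousOn
      · intro t ht; exact (hx t ht).1
  have hint : IntervalIntegrable f MeasureTheory.volume 0 1 := by
    apply ContinuousOn.intervalIntegrable
    rwa [Set.uIcc_of_le (by norm_num : (0:ℝ) ≤ 1)]
  have hineq : ∀ t ∈ Set.Icc (0:ℝ) 1, gFn X * (Q.2 - P.2) ≤ f t := by
    intro t ht
    have hg1 : 0 ≤ gFn (P.2 + t * (Q.2 - P.2)) := gFn_nonneg (hy t ht)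
    have hg2 : gFn X ≤ gFn (P.1 + t * (Q.1 - P.1)) :=
      gFn_anti (hx t ht).1 (hx t ht).2
    have := mul_le_mul_of_nonneg_right hg2 (sub_nonneg.mpr h2)
    have h3 : 0 ≤ gFn (P.2 + t * (Q.2 - P.2)) * (Q.1 - P.1) :=
      mul_nonneg hg1 (sub_nonneg.mpr h1)
    simp only [hf]; linarith
  have hconst : IntervalIntegrable (fun _ : ℝ => gFn X * (Q.2 - P.2))
      MeasureTheory.volume 0 1 := intervalIntegrable_const
  have := intervalIntegral.integral_mono_on (by norm_num : (0:ℝ) ≤ 1) hconst hint hineq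
  simpa [segInt, hf] using this

/-- Lemma: if `S ⊂ R` have dimensions `(a−s, b−t)` and `(a,b)` with
`long(S) ≥ short(R) = a`, then `U(S,R)/q ≥ (b − long(S))·g(aq)`, where
`U(S,R) = W(q·dim S, q·dim R)`. -/
theorem U_offdiagonal_lower_bound (q a b s t : ℝ) (hq : 0 < q) (hab : a ≤ b)
    (hs : 0 ≤ s) (ht : 0 ≤ t) (hS1 : 0 < a - s) (hS2 : 0 < b - t)
    (hlong : a ≤ max (a - s) (b - t)) :
    q * ((b - max (a - s) (b - t)) * gFn (a * q)) ≤
      WFn (q * (a - s), q * (b - t)) (q * a, q * b) := by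
  have ha : 0 < a := by linarith
  have hqa : 0 < q * a := mul_pos hq ha
  set A : ℝ × ℝ := (q * (a - s), q * (b - t)) with hA
  set B : ℝ × ℝ := (q * a, q * b) with hB
  have hAB : A ≤ B := by
    constructor <;> simp only [hA, hB] <;> nlinarith
  apply le_csInf
  · refine ⟨segInt A B, 1, fun i => if i = 0 then A else B, by simp, by simp, ?_, by simp⟩
    intro i hi
    interval_cases i
    simpa using hAB
  · rintro w ⟨n, γ, h0, hn, hmono, rfl⟩
    have mono : ∀ i j, i ≤ j → j ≤ n → γ i ≤ γ j := by
      intro i j hij hjn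
      induction j with
      | zero => obtain rfl := Nat.le_zero.mp hij; exact le_refl _
      | succ k ih =>
        rcases Nat.lt_or_ge i (k + 1) with h | h
        · exact le_trans (ih (Nat.lt_succ_iff.mp h) (by omega)) (hmono k (by omega))
        · obtain rfl : i = k + 1 := le_antisymm hij h
          exact le_refl _
    have hseg : ∀ i ∈ Finset.range n,
        gFn (q * a) * ((γ (i + 1)).2 - (γ i).2) ≤ segInt (γ i) (γ (i + 1)) := by
      intro i hi
      rw [Finset.mem_range] at hi
      have h0i : γ 0 ≤ γ i := mono 0 i (Nat.zero_le _) (by omega)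
      have hin : γ (i + 1) ≤ γ n := mono (i + 1) n (by omega) le_rfl
      apply segInt_ge
      · have := (Prod.le_def.mp h0i).1
        rw [h0] at this
        have : q * (a - s) ≤ (γ i).1 := this
        nlinarith
      · have := (Prod.le_def.mp h0i).2
        rw [h0] at this
        have : q * (b - t) ≤ (γ i).2 := this
        nlinarith
      · exact hmono i hi
      · have := (Prod.le_def.mp hin).1
        rw [hn] at this
        exact this
    have hsum := Finset.sum_le_sum hseg
    have htel : ∑ i ∈ Finset.range n, ((γ (i + 1)).2 - (γ i).2) = (γ n).2 - (γ 0).2 :=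
      Finset.sum_range_sub (fun i => (γ i).2) n
    have hsum2 : ∑ i ∈ Finset.range n, gFn (q * a) * ((γ (i + 1)).2 - (γ i).2)
        = gFn (q * a) * ((γ n).2 - (γ 0).2) := by
      rw [← Finset.mul_sum, htel]
    rw [hsum2, h0, hn] at hsum
    have hg : 0 ≤ gFn (q * a) := gFn_nonneg hqa
    have hgeq : gFn (a * q) = gFn (q * a) := by rw [mul_comm]
    have hfinal : q * ((b - max (a - s) (b - t)) * gFn (a * q))
        ≤ gFn (q * a) * (B.2 - A.2) := by
      rw [hgeq]
      simp only [hA, hB]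
      have hmax : b - max (a - s) (b - t) ≤ t := by
        have := le_max_right (a - s) (b - t); linarith
      nlinarith [mul_nonneg (mul_nonneg hq.le hg) (sub_nonneg.mpr hmax)]
    exact le_trans hfinal hsum
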